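/- arXiv:1110.1070 — 2 statements merged into one kernel-verified Lean document; each statement's English description precedes it below -/
import Mathlib

section
/- Let φ be a Schwartz function with φ̂ supported on [−1/2,1/2], and let ψ be a Schwartz function with ψ̂ smooth and supported on [−2,−1/2] ∪ [1/2,2]. Set φ_k(x) = 2^{−k}φ(2^{−k}x) and ψ_j(x) = 2^{−j}ψ(2^{−j}x). Then there is a constant C depending only on φ and ψ such that for all integers k < j and all x ∈ ℝ, |φ_k * ψ_j(x)| ≤ C 2^{−j}(1 + |2^{−j}x|)^{−2}. -/
open MeasureTheory Real
open scoped FourierTransform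

private lemma aux_mul_le (s p q t B : ℝ) (hs : 0 ≤ s) (hq : 0 ≤ q) (ht : 0 ≤ t)
    (htpq : t ≤ p * q) (hsB : s * p ^ 2 ≤ B) : s * t ^ 2 ≤ B * q ^ 2 := by
  have h1 : t ^ 2 ≤ (p * q) ^ 2 := pow_le_pow_left₀ ht htpq 2
  calc s * t ^ 2 ≤ s * (p * q) ^ 2 := by
        exact mul_le_mul_of_nonneg_left h1 hs
    _ = (s * p ^ 2) * q ^ 2 := by ring
    _ ≤ B * q ^ 2 := mul_le_mul_of_nonneg_right hsB (sq_nonneg q)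

/-- uniform kernel estimate `|φ_k * ψ_j(x)| ≤ C 2^{-j}(1+|2^{-j}x|)^{-2}`
for `k < j`. -/
theorem stmt_2 (φ ψ : SchwartzMap ℝ ℂ)
    (hφ : Function.support (𝓕 (⇑φ)) ⊆ Set.Icc (-(1/2) : ℝ) (1/2))
    (hψ_smooth : ContDiff ℝ (⊤ : ℕ∞) (𝓕 (⇑ψ)))
    (hψ : Function.support (𝓕 (⇑ψ)) ⊆
      Set.Icc (-2 : ℝ) (-(1/2)) ∪ Set.Icc (1/2 : ℝ) 2) :
    ∃ C : ℝ, 0 < C ∧ ∀ (k j : ℤ), k < j → ∀ x : ℝ,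
      ‖∫ y : ℝ, ((2 : ℝ) ^ (-k) * φ ((2 : ℝ) ^ (-k) * y)) *
          ((2 : ℝ) ^ (-j) * ψ ((2 : ℝ) ^ (-j) * (x - y)))‖ ≤
        C * (2 : ℝ) ^ (-j) * (1 + |(2 : ℝ) ^ (-j) * x|) ^ (-2 : ℤ) := by
  -- decay bound for ψ : ‖ψ z‖ * (1+|z|)^2 ≤ B
  obtain ⟨C0, hC0pos, hC0⟩ := ψ.decay 0 0
  obtain ⟨C2, hC2pos, hC2⟩ := ψ.decay 2 0
  set B : ℝ := 2 * C0 + 2 * C2 with hBdef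
  have hBpos : 0 < B := by positivity
  have hB : ∀ z : ℝ, ‖ψ z‖ * (1 + |z|) ^ 2 ≤ B := by
    intro z
    have h0 := hC0 z
    have h2 := hC2 z
    simp only [pow_zero, one_mul, norm_iteratedFDeriv_zero] at h0 h2
    have hz : ‖z‖ = |z| := Real.norm_eq_abs z
    rw [hz] at h2
    have habs : 0 ≤ |z| := abs_nonneg z
    have hψn : 0 ≤ ‖ψ z‖ := norm_nonneg _
    nlinarith [sq_nonneg (1 - |z|), mul_nonneg hψn (sq_nonneg (1 - |z|))]
  -- integrability of F u = ‖φ u‖ (1+|u|)^2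
  set F : ℝ → ℝ := fun u => ‖φ u‖ * (1 + |u|) ^ 2 with hFdef
  have hFnonneg : ∀ u, 0 ≤ F u := fun u => by positivity
  have hFint : Integrable F := by
    have h0 := φ.integrable_pow_mul volume 0
    have h1 := φ.integrable_pow_mul volume 1
    have h2 := φ.integrable_pow_mul volume 2
    have h := (h0.add ((h1.const_mul 2).add h2))
    apply h.congr
    filter_upwards with u
    simp only [F, Pi.add_apply, pow_zero, one_mul, pow_one, Real.norm_eq_abs]
    ring
  set A : ℝ := ∫ u : ℝ, F u with hAdef
  have hA : 0 ≤ A := integral_nonneg hFnonneg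
  refine ⟨B * A + 1, by positivity, ?_⟩
  intro k j hkj x
  set a : ℝ := (2 : ℝ) ^ (-k) with hadef
  set b : ℝ := (2 : ℝ) ^ (-j) with hbdef
  have ha : 0 < a := zpow_pos (by norm_num) _
  have hb : 0 < b := zpow_pos (by norm_num) _
  have hba : b ≤ a := by
    apply zpow_le_zpow_right₀ (by norm_num : (1:ℝ) ≤ 2)
    omega
  set t : ℝ := 1 + |b * x| with htdef
  have ht : (1 : ℝ) ≤ t := by
    have := abs_nonneg (b * x); rw [htdef]; linarith
  have ht0 : 0 < t := by linarith
  have hT : (1 + |(2 : ℝ) ^ (-j) * x|) ^ (-2 : ℤ) = (t ^ 2)⁻¹ := by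
    rw [← hbdef, ← htdef, zpow_neg]
    congr 1
  rw [hT]
  -- pointwise bound
  have hpt : ∀ y : ℝ,
      ‖((2 : ℝ) ^ (-k) * φ ((2 : ℝ) ^ (-k) * y) : ℂ) *
          ((2 : ℝ) ^ (-j) * ψ ((2 : ℝ) ^ (-j) * (x - y)))‖ ≤
        (B * b * (t ^ 2)⁻¹) * (a * F (a * y)) := by
    intro y
    have hcoef : ∀ (m : ℤ), ‖(((2 : ℝ) : ℂ)) ^ m‖ = (2 : ℝ) ^ m := by
      intro m
      rw [norm_zpow, Complex.norm_real, Real.norm_eq_abs]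
      norm_num
    rw [norm_mul, norm_mul, norm_mul, hcoef, hcoef, ← hadef, ← hbdef]
    set z : ℝ := b * (x - y) with hzdef
    set q : ℝ := 1 + |a * y| with hqdef
    have hq : 0 ≤ q := by positivity
    -- Peetre : t ≤ (1+|z|) * q
    have hpeetre : t ≤ (1 + |z|) * q := by
      have h1 : |b * x| ≤ |z| + |b * y| := by
        have : b * x = z + b * y := by rw [hzdef]; ring
        rw [this]
        exact abs_add_le _ _
      have h2 : |b * y| ≤ |a * y| := by
        rw [abs_mul, abs_mul, abs_of_pos ha, abs_of_pos hb]
        exact mul_le_mul_of_nonneg_right hba (abs_nonneg y)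
      have h3 : 0 ≤ |z| := abs_nonneg z
      have h4 : 0 ≤ |a * y| := abs_nonneg _
      have : (1 + |z|) * q = 1 + |z| + |a * y| + |z| * |a * y| := by
        rw [hqdef]; ring
      rw [this, htdef]
      nlinarith [mul_nonneg h3 h4]
    have key : ‖ψ z‖ * t ^ 2 ≤ B * q ^ 2 :=
      aux_mul_le ‖ψ z‖ (1 + |z|) q t B (norm_nonneg _) hq ht0.le hpeetre (hB z)
    have hψz : ‖ψ z‖ ≤ B * q ^ 2 * (t ^ 2)⁻¹ := by
      rw [← div_eq_mul_inv, le_div_iff₀ (by positivity)]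
      exact key
    calc a * ‖φ (a * y)‖ * (b * ‖ψ z‖)
        ≤ a * ‖φ (a * y)‖ * (b * (B * q ^ 2 * (t ^ 2)⁻¹)) := by
          apply mul_le_mul_of_nonneg_left _ (by positivity)
          exact mul_le_mul_of_nonneg_left hψz hb.le
      _ = (B * b * (t ^ 2)⁻¹) * (a * F (a * y)) := by
          simp only [F, ← hqdef]
          ring
  -- integrability of the majorant
  have hmajint : Integrable (fun y : ℝ => (B * b * (t ^ 2)⁻¹) * (a * F (a * y))) := by
    exact (((hFint.comp_mul_left' ha.ne').const_mul a).const_mul _)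
  have hbound := norm_integral_le_of_norm_le hmajint (Filter.Eventually.of_forall hpt)
  refine hbound.trans ?_
  have hint : (∫ y : ℝ, (B * b * (t ^ 2)⁻¹) * (a * F (a * y)))
      = (B * b * (t ^ 2)⁻¹) * (a * (a⁻¹ * A)) := by
    rw [integral_const_mul]
    congr 1
    rw [integral_const_mul]
    congr 1
    rw [MeasureTheory.Measure.integral_comp_mul_left F a, smul_eq_mul, abs_of_pos (inv_pos.mpr ha)]
  rw [hint, mul_inv_cancel_left₀ ha.ne']
  have hTnn : (0:ℝ) ≤ (t ^ 2)⁻¹ := by positivity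
  calc B * b * (t ^ 2)⁻¹ * A = (B * A) * b * (t ^ 2)⁻¹ := by ring
    _ ≤ (B * A + 1) * b * (t ^ 2)⁻¹ := by
        apply mul_le_mul_of_nonneg_right _ hTnn
        apply mul_le_mul_of_nonneg_right _ hb.le
        linarith
end

section
/- Let φ be a Schwartz function with φ̂ supported on [−1/2,1/2], and let ψ be a Schwartz function with ψ̂ smooth and supported on [−2,−1/2] ∪ [1/2,2]. Set φ_k(x) = 2^{−k}φ(2^{−k}x) and ψ_j(x) = 2^{−j}ψ(2^{−j}x). Then there is a constant C depending only on φ and ψ such that for all integers k < j and all x ∈ ℝ, |d/dx (φ_k * ψ_j)(x)| ≤ C 2^{−2j}(1 + |2^{−j}x|)^{−2}. -/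
open MeasureTheory Real
open scoped FourierTransform

/-- uniform derivative estimate
`|d/dx(φ_k * ψ_j)(x)| ≤ C 2^{-2j}(1+|2^{-j}x|)^{-2}` for `k < j`. -/
theorem stmt_3 (φ ψ : SchwartzMap ℝ ℂ)
    (hφ : Function.support (𝓕 (⇑φ)) ⊆ Set.Icc (-(1/2) : ℝ) (1/2))
    (hψ_smooth : ContDiff ℝ (⊤ : ℕ∞) (𝓕 (⇑ψ)))
    (hψ : Function.support (𝓕 (⇑ψ)) ⊆
      Set.Icc (-2 : ℝ) (-(1/2)) ∪ Set.Icc (1/2 : ℝ) 2) :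
    ∃ C : ℝ, 0 < C ∧ ∀ (k j : ℤ), k < j → ∀ x : ℝ,
      ‖deriv (fun z : ℝ => ∫ y : ℝ, ((2 : ℝ) ^ (-k) * φ ((2 : ℝ) ^ (-k) * y)) *
          ((2 : ℝ) ^ (-j) * ψ ((2 : ℝ) ^ (-j) * (z - y)))) x‖ ≤
        C * (2 : ℝ) ^ (-2 * j) * (1 + |(2 : ℝ) ^ (-j) * x|) ^ (-2 : ℤ) := by
  clear hφ hψ_smooth hψ
  set ψd : SchwartzMap ℝ ℂ := SchwartzMap.derivCLM ℝ ℂ ψ with hψd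
  have hψd_apply : ∀ u : ℝ, ψd u = deriv (⇑ψ) u := fun u => SchwartzMap.derivCLM_apply ℝ ψ u
  obtain ⟨M, hM0, hM⟩ : ∃ M : ℝ, 0 ≤ M ∧ ∀ u : ℝ, (1 + |u|) ^ 2 * ‖deriv (⇑ψ) u‖ ≤ M := by
    refine ⟨2 ^ 2 * (Finset.Iic ((2, 0) : ℕ × ℕ)).sup
      (fun m => SchwartzMap.seminorm ℝ m.1 m.2) ψd, by positivity, fun u => ?_⟩
    have := SchwartzMap.one_add_le_sup_seminorm_apply (𝕜 := ℝ) (m := ((2, 0) : ℕ × ℕ))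
      le_rfl le_rfl ψd u
    simpa [norm_iteratedFDeriv_zero, Real.norm_eq_abs, hψd_apply] using this
  have hMd : ∀ u : ℝ, ‖deriv (⇑ψ) u‖ ≤ M := by
    intro u
    refine le_trans ?_ (hM u)
    exact le_mul_of_one_le_left (norm_nonneg _) (by nlinarith [abs_nonneg u])
  set Mψ : ℝ := SchwartzMap.seminorm ℝ 0 0 ψ with hMψdef
  have hMψ : ∀ u : ℝ, ‖ψ u‖ ≤ Mψ := fun u => SchwartzMap.norm_le_seminorm ℝ ψ u
  set h : ℝ → ℝ := fun u => (1 + |u|) ^ 2 * ‖φ u‖ with hh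
  have hint : Integrable h := by
    have h1 := φ.integrable_pow_mul volume 1
    have h2 := φ.integrable_pow_mul volume 2
    have e : h = fun u => (‖φ u‖ + 2 * (‖u‖ ^ 1 * ‖φ u‖)) + ‖u‖ ^ 2 * ‖φ u‖ := by
      funext u; simp only [hh, Real.norm_eq_abs, pow_one]; ring
    rw [e]
    exact (φ.integrable.norm.add (h1.const_mul 2)).add h2
  set B : ℝ := ∫ u, h u with hB
  have hB0 : 0 ≤ B := integral_nonneg fun u => by positivity
  refine ⟨M * B + 1, by positivity, fun k j hkj x => ?_⟩
  simp only [← Complex.ofReal_zpow]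
  set a : ℝ := (2 : ℝ) ^ (-k) with hadef
  set b : ℝ := (2 : ℝ) ^ (-j) with hbdef
  have ha : 0 < a := by positivity
  have hb : 0 < b := by positivity
  have hba : b ≤ a := zpow_le_zpow_right₀ one_le_two (by omega)
  have key := hasDerivAt_integral_of_dominated_loc_of_deriv_le (μ := volume) (x₀ := x)
      (F := fun z y => ((a : ℂ) * φ (a * y)) * ((b : ℂ) * ψ (b * (z - y))))
      (F' := fun z y => ((a : ℂ) * φ (a * y)) * ((b : ℂ) * (b • deriv (⇑ψ) (b * (z - y)))))
      (bound := fun y => (a * ‖φ (a * y)‖) * (b * (b * M)))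
      (Metric.ball_mem_nhds x one_pos) ?_ ?_ ?_ ?_ ?_ ?_
  · obtain ⟨hFi, hd⟩ := key
    rw [hd.deriv]
    set K : ℝ := b ^ 2 * M * ((1 + |b * x|) ^ 2)⁻¹ with hK
    have hptw : ∀ y : ℝ, ‖((a : ℂ) * φ (a * y)) * ((b : ℂ) * (b • deriv (⇑ψ) (b * (x - y))))‖
        ≤ a * h (a * y) * K := by
      intro y
      have hdn : (0:ℝ) ≤ ‖deriv (⇑ψ) (b * (x - y))‖ := norm_nonneg _
      have peetre : (1 + |b * x|) ≤ (1 + |b * (x - y)|) * (1 + |b * y|) := by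
        have habs : |b * x| ≤ |b * (x - y)| + |b * y| := by
          have e : b * x = b * (x - y) + b * y := by ring
          rw [e]; exact abs_add_le _ _
        nlinarith [abs_nonneg (b * (x - y)), abs_nonneg (b * y)]
      have p2 : (1 + |b * x|) ^ 2 ≤ (1 + |b * (x - y)|) ^ 2 * (1 + |b * y|) ^ 2 := by
        rw [← mul_pow]; exact pow_le_pow_left₀ (by positivity) peetre 2
      have hby : (1 + |b * y|) ^ 2 ≤ (1 + |a * y|) ^ 2 := by
        have e : |b * y| ≤ |a * y| := by
          rw [abs_mul, abs_mul, abs_of_pos hb, abs_of_pos ha]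
          exact mul_le_mul_of_nonneg_right hba (abs_nonneg y)
        exact pow_le_pow_left₀ (by positivity) (by linarith) 2
      have main : ‖deriv (⇑ψ) (b * (x - y))‖ * (1 + |b * x|) ^ 2
          ≤ M * (1 + |a * y|) ^ 2 := by
        calc ‖deriv (⇑ψ) (b * (x - y))‖ * (1 + |b * x|) ^ 2
            ≤ ‖deriv (⇑ψ) (b * (x - y))‖ *
              ((1 + |b * (x - y)|) ^ 2 * (1 + |b * y|) ^ 2) :=
              mul_le_mul_of_nonneg_left p2 hdn
          _ = ((1 + |b * (x - y)|) ^ 2 * ‖deriv (⇑ψ) (b * (x - y))‖) * (1 + |b * y|) ^ 2 := by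
              ring
          _ ≤ M * (1 + |b * y|) ^ 2 := mul_le_mul_of_nonneg_right (hM _) (by positivity)
          _ ≤ M * (1 + |a * y|) ^ 2 := mul_le_mul_of_nonneg_left hby hM0
      have hdb : ‖deriv (⇑ψ) (b * (x - y))‖
          ≤ M * (1 + |a * y|) ^ 2 * ((1 + |b * x|) ^ 2)⁻¹ := by
        rw [← div_eq_mul_inv]
        exact (le_div_iff₀ (by positivity)).mpr main
      calc ‖((a : ℂ) * φ (a * y)) * ((b : ℂ) * (b • deriv (⇑ψ) (b * (x - y))))‖
          = (a * ‖φ (a * y)‖) * (b * (b * ‖deriv (⇑ψ) (b * (x - y))‖)) := by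
            simp only [norm_mul, norm_smul, Complex.norm_real, Real.norm_eq_abs,
              abs_of_pos ha, abs_of_pos hb]
        _ ≤ (a * ‖φ (a * y)‖) * (b * (b * (M * (1 + |a * y|) ^ 2 * ((1 + |b * x|) ^ 2)⁻¹))) := by
            gcongr
        _ = a * h (a * y) * K := by rw [hh, hK]; ring
    have hg2 : Integrable (fun y : ℝ => a * h (a * y) * K) :=
      ((hint.comp_mul_left' ha.ne').const_mul a).mul_const K
    have e1 : (2 : ℝ) ^ (-2 * j) = b ^ 2 := by
      rw [hbdef, show (-2 * j) = (-j) * 2 by ring, zpow_mul, zpow_two, pow_two]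
    have e2 : (1 + |b * x|) ^ (-2 : ℤ) = ((1 + |b * x|) ^ 2)⁻¹ := by
      rw [zpow_neg, zpow_two, pow_two]
    calc ‖∫ y : ℝ, ((a : ℂ) * φ (a * y)) * ((b : ℂ) * (b • deriv (⇑ψ) (b * (x - y))))‖
        ≤ ∫ y : ℝ, ‖((a : ℂ) * φ (a * y)) * ((b : ℂ) * (b • deriv (⇑ψ) (b * (x - y))))‖ :=
          norm_integral_le_integral_norm _
      _ ≤ ∫ y : ℝ, a * h (a * y) * K := integral_mono hFi.norm hg2 hptw
      _ = B * K := by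
          rw [integral_mul_const]
          congr 1
          rw [MeasureTheory.integral_const_mul, Measure.integral_comp_mul_left h a, smul_eq_mul,
            abs_of_pos (inv_pos.mpr ha)]
          field_simp
          exact hB.symm
      _ = (M * B) * (b ^ 2 * ((1 + |b * x|) ^ 2)⁻¹) := by rw [hK]; ring
      _ ≤ (M * B + 1) * (b ^ 2 * ((1 + |b * x|) ^ 2)⁻¹) :=
          mul_le_mul_of_nonneg_right (by linarith) (by positivity)
      _ = (M * B + 1) * (2 : ℝ) ^ (-2 * j) * (1 + |b * x|) ^ (-2 : ℤ) := by
          rw [e1, e2]; ring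
  · exact Filter.Eventually.of_forall fun z =>
      Continuous.aestronglyMeasurable (by fun_prop)
  · refine Integrable.mono'
      (((φ.integrable.norm.comp_mul_left' ha.ne').const_mul a).mul_const (b * Mψ))
      (Continuous.aestronglyMeasurable (by fun_prop))
      (Filter.Eventually.of_forall fun y => ?_)
    simp only [norm_mul, Complex.norm_real, Real.norm_eq_abs, abs_of_pos ha, abs_of_pos hb]
    gcongr
    exact hMψ _
  · have hcont : Continuous (deriv (⇑ψ)) := ψd.continuous.congr fun u => hψd_apply u
    exact Continuous.aestronglyMeasurable (by fun_prop)
  · refine Filter.Eventually.of_forall fun y => fun z _ => ?_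
    simp only [norm_mul, norm_smul, Complex.norm_real, Real.norm_eq_abs,
      abs_of_pos ha, abs_of_pos hb]
    gcongr
    exact hMd _
  · exact ((φ.integrable.norm.comp_mul_left' ha.ne').const_mul a).mul_const (b * (b * M))
  · refine Filter.Eventually.of_forall fun y => fun z _ => ?_
    have h1 : HasDerivAt (fun z : ℝ => b * (z - y)) b z := by
      simpa using ((hasDerivAt_id z).sub_const y).const_mul b
    have h2 : HasDerivAt (⇑ψ) (deriv (⇑ψ) (b * (z - y))) (b * (z - y)) :=
      ψ.differentiableAt.hasDerivAt
    exact ((h2.scomp z h1).const_mul (b : ℂ)).const_mul _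
end
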